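/- arXiv:2510.00447 — 6 statements merged into one kernel-verified Lean document; each statement's English description precedes it below -/
import Mathlib

section
/- Let S_g : ℓ²(ℕ×ℕ) → ℓ²(ℤ×ℤ) be the unitary operator with (S_g a)(n,m) = a(g⁻¹(n,m)), so that S_g e_{α,β} = δ_{g(α,β)}. Then S_g ∘ H_T ∘ S_g⁻¹ = T', where T' is the bounded operator on ℓ²(ℤ×ℤ) determined on the standard basis (δ_{n,m}) by T'δ_{n,m} = u(n,m) + d(n,m), with u(n,m) = δ_{n+1,m−1} if n ≥ 0 and m ≥ 1; δ_{n+1,m+1} if n ≤ −1 and m ≥ 0; δ_{n+1,m+1} if n ≥ 0 and m ≤ −2; δ_{0,m} if n = −1 and m ≤ −1; δ_{n+1,m−1} if n ≤ −2 and m ≤ −1; and u(n,m) = 0 otherwise; and d(n,m) = δ_{n−1,m+1} if n ≥ 1 and m ≥ 0; δ_{n−1,m−1} if n ≤ 0 and m ≥ 1; δ_{n−1,m−1} if n ≥ 1 and m ≤ −1; δ_{−1,m} if n = 0 and m ≤ −1; δ_{n−1,m+1} if n ≤ −1 and m ≤ −2; and d(n,m) = 0 otherwise. -/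
/-! `g` is a bijection with the explicit inverse `jjGInv` below, so `S_g e_{α,β} = δ_{g(α,β)}`.
Since `H_T e_{α,β} = e_{α+1,β−1} + e_{α−1,β+1}` (each term present only when it lies in `ℕ×ℕ`),
the theorem reduces to `u(g(α,β)) = δ_{g(α+1,β−1)}` for `β ≥ 1` (and `0` for `β = 0`) and
`d(g(α,β)) = δ_{g(α−1,β+1)}` for `α ≥ 1` (and `0` for `α = 0`). Both are a case check on the
parity of `α − β` and on the sign of `⌊(α − β)/2⌋`, which decide the branch of `g` and of `u`, `d`. -/

/-- The map `g : ℕ×ℕ → ℤ×ℤ`,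
`g(α,β) = ((α−β)/2, min(α,β))` if `α−β` is even, and
`g(α,β) = ((α−β−1)/2, −min(α,β)−1)` if `α−β` is odd.  It is a bijection. -/
def jjG (p : ℕ × ℕ) : ℤ × ℤ :=
  if Even ((p.1 : ℤ) - (p.2 : ℤ)) then
    (((p.1 : ℤ) - (p.2 : ℤ)) / 2, (min p.1 p.2 : ℤ))
  else
    (((p.1 : ℤ) - (p.2 : ℤ) - 1) / 2, -(min p.1 p.2 : ℤ) - 1)

/-- The tunneling operator `H_T` on `ℓ²(ℕ×ℕ)`, coordinate action:
`(H_T a)(p,q) = a(p+1,q−1)·[q ≥ 1] + a(p−1,q+1)·[p ≥ 1]`;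
equivalently `H_T e_{α,β} = e_{α−1,β+1}·[α ≥ 1] + e_{α+1,β−1}·[β ≥ 1]`. -/
def tunnel (a : ℕ × ℕ → ℂ) : ℕ × ℕ → ℂ := fun p =>
  (if 1 ≤ p.2 then a (p.1 + 1, p.2 - 1) else 0) +
  (if 1 ≤ p.1 then a (p.1 - 1, p.2 + 1) else 0)

/-- Standard basis vector `e_{α,β}` of `ℓ²(ℕ×ℕ)`. -/
def eNN (α β : ℕ) : ℕ × ℕ → ℂ := fun p => if p = (α, β) then 1 else 0

/-- Standard basis vector `δ_{n,m}` of `ℓ²(ℤ×ℤ)`. -/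
def deltaZZ (r : ℤ × ℤ) : ℤ × ℤ → ℂ := fun p => if p = r then 1 else 0

/-- The unitary `S_g`, i.e. precomposition with `g⁻¹`; in particular
`S_g e_{α,β} = δ_{g(α,β)}`. -/
noncomputable def Sg (a : ℕ × ℕ → ℂ) : ℤ × ℤ → ℂ := fun q => a (Function.invFun jjG q)

/-- `u(n,m)` : the "up" part of `T'` on the basis vector `δ_{n,m}`. -/
def uVec (r : ℤ × ℤ) : ℤ × ℤ → ℂ :=
  if 0 ≤ r.1 ∧ 1 ≤ r.2 then deltaZZ (r.1 + 1, r.2 - 1)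
  else if r.1 ≤ -1 ∧ 0 ≤ r.2 then deltaZZ (r.1 + 1, r.2 + 1)
  else if 0 ≤ r.1 ∧ r.2 ≤ -2 then deltaZZ (r.1 + 1, r.2 + 1)
  else if r.1 = -1 ∧ r.2 ≤ -1 then deltaZZ (0, r.2)
  else if r.1 ≤ -2 ∧ r.2 ≤ -1 then deltaZZ (r.1 + 1, r.2 - 1)
  else 0

/-- `d(n,m)` : the "down" part of `T'` on the basis vector `δ_{n,m}`. -/
def dVec (r : ℤ × ℤ) : ℤ × ℤ → ℂ :=
  if 1 ≤ r.1 ∧ 0 ≤ r.2 then deltaZZ (r.1 - 1, r.2 + 1)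
  else if r.1 ≤ 0 ∧ 1 ≤ r.2 then deltaZZ (r.1 - 1, r.2 - 1)
  else if 1 ≤ r.1 ∧ r.2 ≤ -1 then deltaZZ (r.1 - 1, r.2 - 1)
  else if r.1 = 0 ∧ r.2 ≤ -1 then deltaZZ (-1, r.2)
  else if r.1 ≤ -1 ∧ r.2 ≤ -2 then deltaZZ (r.1 - 1, r.2 + 1)
  else 0

def jjGInv (r : ℤ × ℤ) : ℕ × ℕ :=
  if 0 ≤ r.2 then
    if 0 ≤ r.1 then ((r.2 + 2 * r.1).toNat, r.2.toNat)
    else (r.2.toNat, (r.2 - 2 * r.1).toNat)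
  else
    if 0 ≤ r.1 then ((-r.2 + 2 * r.1).toNat, (-r.2 - 1).toNat)
    else ((-r.2 - 1).toNat, (-r.2 - 2 * r.1 - 2).toNat)

lemma jjGInv_leftInverse : Function.LeftInverse jjGInv jjG := by
  rintro ⟨a, b⟩
  simp only [jjG, jjGInv, Int.even_iff]
  split_ifs <;> simp_all [Prod.ext_iff] <;> omega

lemma jjGInv_rightInverse : Function.RightInverse jjGInv jjG := by
  rintro ⟨n, m⟩
  simp only [jjG, jjGInv, Int.even_iff]
  split_ifs <;> simp_all [Prod.ext_iff] <;> omega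

lemma invFun_jjG : Function.invFun jjG = jjGInv :=
  Function.invFun_eq_of_injective_of_rightInverse jjGInv_leftInverse.injective
    jjGInv_rightInverse

lemma Sg_add (a b : ℕ × ℕ → ℂ) : Sg (a + b) = Sg a + Sg b := rfl

lemma Sg_zero : Sg 0 = 0 := rfl

lemma Sg_eNN (α β : ℕ) : Sg (eNN α β) = deltaZZ (jjG (α, β)) := by
  funext q
  have hq : jjGInv q = (α, β) ↔ q = jjG (α, β) :=
    ⟨fun h ↦ h ▸ (jjGInv_rightInverse q).symm, fun h ↦ h ▸ jjGInv_leftInverse _⟩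
  simp only [Sg, eNN, deltaZZ, invFun_jjG, hq]

lemma tunnel_eNN (α β : ℕ) :
    tunnel (eNN α β) =
      (if 1 ≤ β then eNN (α + 1) (β - 1) else 0) +
      (if 1 ≤ α then eNN (α - 1) (β + 1) else 0) := by
  funext ⟨a, b⟩
  simp only [tunnel, eNN, Pi.add_apply, Prod.mk.injEq, apply_ite (fun f : ℕ × ℕ → ℂ ↦ f (a, b)),
    Pi.zero_apply]
  split_ifs <;> first | omega | simp

lemma uVec_jjG (α β : ℕ) :
    uVec (jjG (α, β)) = if 1 ≤ β then deltaZZ (jjG (α + 1, β - 1)) else 0 := by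
  rcases β with _ | β
  · simp only [jjG, uVec, Int.even_iff]
    split_ifs <;> first | rfl | omega
  · simp only [jjG, uVec, Int.even_iff, Nat.cast_add, Nat.cast_one, Nat.add_sub_cancel]
    split_ifs <;> first | rfl | omega | (congr 1; ext <;> simp only <;> omega)

lemma dVec_jjG (α β : ℕ) :
    dVec (jjG (α, β)) = if 1 ≤ α then deltaZZ (jjG (α - 1, β + 1)) else 0 := by
  rcases α with _ | α
  · simp only [jjG, dVec, Int.even_iff]
    split_ifs <;> first | rfl | omega
  · simp only [jjG, dVec, Int.even_iff, Nat.cast_add, Nat.cast_one, Nat.add_sub_cancel]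
    split_ifs <;> first | rfl | omega | (congr 1; ext <;> simp only <;> omega)

-- The operator identity `S_g H_T S_g⁻¹ = T'` between bounded operators is equivalent to
-- this identity on the basis vectors `e_{α,β}`.
/-- `S_g ∘ H_T ∘ S_g⁻¹ = T'`, where the bounded operator `T'` is
determined on the standard basis by `T' δ_{n,m} = u(n,m) + d(n,m)`.  Since both
sides are bounded and `S_g e_{α,β} = δ_{g(α,β)}`, this is equivalent to the
basis identity `S_g (H_T e_{α,β}) = u(g(α,β)) + d(g(α,β))` for all `α, β`. -/
theorem stmt4 (α β : ℕ) :
    Sg (tunnel (eNN α β)) = uVec (jjG (α, β)) + dVec (jjG (α, β)) := by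
  rw [tunnel_eNN, Sg_add, apply_ite Sg, apply_ite Sg, Sg_eNN, Sg_eNN, Sg_zero, uVec_jjG, dVec_jjG]
end

section
/- Let f : ℕ×ℕ → ℤ×ℕ, f(α,β) = (α−β, min(α,β)) (a bijection), let S_f : ℓ²(ℕ×ℕ) → ℓ²(ℤ×ℕ) be the unitary with (S_f a)(n,m) = a(f⁻¹(n,m)), and set H_T^f = S_f ∘ H_T ∘ S_f⁻¹. If a ∈ ℓ²(ℤ×ℕ) vanishes at every index (n,m) with n odd, then H_T^f a vanishes at every index (n,m) with n odd; and if a vanishes at every index (n,m) with n even, then H_T^f a vanishes at every index (n,m) with n even. Hence H_T^f is reduced by the two closed subspaces of ℓ²(ℤ×ℕ) consisting of elements supported on even, respectively odd, first coordinate. -/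
/-- The folding map `f : ℕ×ℕ → ℤ×ℕ`, `f(α,β) = (α − β, min(α,β))`. -/
def jjF (p : ℕ × ℕ) : ℤ × ℕ := ((p.1 : ℤ) - (p.2 : ℤ), min p.1 p.2)

/-- The inverse of `f`. -/
def jjFinv (q : ℤ × ℕ) : ℕ × ℕ :=
  if 0 ≤ q.1 then (q.2 + q.1.toNat, q.2) else (q.2, q.2 + (-q.1).toNat)

/-- `S_f a = a ∘ f⁻¹`. -/
def Sf (a : ℕ × ℕ → ℂ) : ℤ × ℕ → ℂ := fun q => a (jjFinv q)

/-- `S_f⁻¹ b = b ∘ f`. -/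
def SfInv (b : ℤ × ℕ → ℂ) : ℕ × ℕ → ℂ := fun p => b (jjF p)

/-- `H_T^f = S_f ∘ H_T ∘ S_f⁻¹`. -/
def tunnelF (b : ℤ × ℕ → ℂ) : ℤ × ℕ → ℂ := Sf (tunnel (SfInv b))

/-! Each hop `(α, β) ↦ (α ± 1, β ∓ 1)` of `H_T` shifts `α − β` by `± 2`, so `(H_T^f a)(n, m)` only
involves values of `a` with first coordinate `n ± 2`, which has the parity of `n`. -/

lemma jjFinv_fst_sub_snd (q : ℤ × ℕ) : ((jjFinv q).1 : ℤ) - (jjFinv q).2 = q.1 := by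
  unfold jjFinv
  split_ifs <;> simp <;> omega

lemma tunnel_apply_eq_zero {a : ℕ × ℕ → ℂ} {p : ℕ × ℕ}
    (h : ∀ r : ℕ × ℕ,
      ((r.1 : ℤ) - r.2 = (p.1 : ℤ) - p.2 + 2 ∨ (r.1 : ℤ) - r.2 = (p.1 : ℤ) - p.2 - 2) → a r = 0) :
    tunnel a p = 0 := by
  have hop_right : 1 ≤ p.2 → a (p.1 + 1, p.2 - 1) = 0 := fun hq => h _ (by dsimp only; omega)
  have hop_left : 1 ≤ p.1 → a (p.1 - 1, p.2 + 1) = 0 := fun hp => h _ (by dsimp only; omega)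
  unfold tunnel
  split_ifs <;> simp [*]

lemma tunnelF_apply_eq_zero {a : ℤ × ℕ → ℂ} {n : ℤ} (m : ℕ)
    (h : ∀ k : ℕ, a (n + 2, k) = 0 ∧ a (n - 2, k) = 0) :
    tunnelF a (n, m) = 0 := by
  refine tunnel_apply_eq_zero fun r hr => ?_
  rw [jjFinv_fst_sub_snd] at hr
  rcases hr with hr | hr <;> simp only [SfInv, jjF, hr, h]

/-- `H_T^f` preserves the subspaces supported on even, resp. odd,
first coordinate; hence it is reduced by these two subspaces. -/
theorem stmt6 :
    (∀ a : ℤ × ℕ → ℂ, (∀ (n : ℤ) (m : ℕ), Odd n → a (n, m) = 0) →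
      ∀ (n : ℤ) (m : ℕ), Odd n → tunnelF a (n, m) = 0) ∧
    (∀ a : ℤ × ℕ → ℂ, (∀ (n : ℤ) (m : ℕ), Even n → a (n, m) = 0) →
      ∀ (n : ℤ) (m : ℕ), Even n → tunnelF a (n, m) = 0) := by
  refine ⟨fun a ha n m hn => tunnelF_apply_eq_zero m fun k => ⟨ha _ _ ?_, ha _ _ ?_⟩,
    fun a ha n m hn => tunnelF_apply_eq_zero m fun k => ⟨ha _ _ ?_, ha _ _ ?_⟩⟩ <;>
  simp [parity_simps, hn]
end

section
/- Let k ≥ 2 be an integer and let a₀ ∈ ℂ and a_n⁺, a_n⁻ ∈ ℂ for n = 1,…,k. Set ψ = Σ_{n=1}^{k} a_n⁺ e_{n,k−n} + Σ_{n=1}^{k} a_n⁻ e_{−n,k−n} + a₀ e_{0,k} ∈ H. Then, as elements of H, H_{S¹,T} ψ (θ₁,θ₂) = a_k⁻ e^{i(θ₁+θ₂)} e^{−ikθ₁} + a_k⁺ e^{−i(θ₁−θ₂)} e^{ikθ₁} + 2cos(θ₁) a₀ e^{i(k−1)θ₂} + 2cos(θ₁+θ₂) Σ_{n=1}^{k−1}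 a_n⁻ e^{−inθ₁} e^{i(k−n)θ₂} + 2cos(θ₁−θ₂) Σ_{n=1}^{k−1} a_n⁺ e^{inθ₁} e^{i(k−n)θ₂}. -/
noncomputable section

/-- Fourier coefficient model of `L²((ℝ/2πℤ)²)`: trigonometric polynomials and more
general elements are described by their coefficient families `c : ℤ×ℤ → ℂ`,
`c ↔ Σ c(n,m) e^{i(nθ₁+mθ₂)}`. -/
abbrev Coef := (ℤ × ℤ) → ℂ

/-- The projection `P¹_M` (restriction of the first Fourier index to `M`). -/
def proj1 (S : ℤ → Prop) [DecidablePred S] (c : Coef) : Coef := fun p =>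
  if S p.1 then c p else 0

/-- The projection `P²_M` (restriction of the second Fourier index to `M`). -/
def proj2 (S : ℤ → Prop) [DecidablePred S] (c : Coef) : Coef := fun p =>
  if S p.2 then c p else 0

/-- Multiplication by `e^{i(aθ₁+bθ₂)}`, i.e. the shift of Fourier coefficients. -/
def Emul (a b : ℤ) (c : Coef) : Coef := fun p => c (p.1 - a, p.2 - b)

/-- `A₀ = E_{1,1}P¹_{(−∞,−1]} + E_{−1,1}P¹_{[1,∞)}`. -/
def opA0 (c : Coef) : Coef :=
  Emul 1 1 (proj1 (fun n => n ≤ -1) c) + Emul (-1) 1 (proj1 (fun n => 1 ≤ n) c)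

/-- `A₊ = E_{−1,−1}P¹_{(−∞,0]} + E_{−1,1}P¹_{[1,∞)} + E_{1,1}P¹_{(−∞,−1]} + E_{1,−1}P¹_{[0,∞)}`. -/
def opAplus (c : Coef) : Coef :=
  Emul (-1) (-1) (proj1 (fun n => n ≤ 0) c) + Emul (-1) 1 (proj1 (fun n => 1 ≤ n) c)
    + Emul 1 1 (proj1 (fun n => n ≤ -1) c) + Emul 1 (-1) (proj1 (fun n => 0 ≤ n) c)

/-- `A₋₁ = E_{1,−1}P¹_{(−∞,−2]} + E_{1,0}P¹_{{−1}} + E_{−1,0}P¹_{{0}} + E_{−1,−1}P¹_{[1,∞)}`. -/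
def opAm1 (c : Coef) : Coef :=
  Emul 1 (-1) (proj1 (fun n => n ≤ -2) c) + Emul 1 0 (proj1 (fun n => n = -1) c)
    + Emul (-1) 0 (proj1 (fun n => n = 0) c) + Emul (-1) (-1) (proj1 (fun n => 1 ≤ n) c)

/-- `A₋ = E_{−1,1}P¹_{(−∞,−1]} + E_{−1,0}P¹_{{0}} + E_{−1,−1}P¹_{[1,∞)}
       + E_{1,−1}P¹_{(−∞,−2]} + E_{1,0}P¹_{{−1}} + E_{1,1}P¹_{[0,∞)}`. -/
def opAminus (c : Coef) : Coef :=
  Emul (-1) 1 (proj1 (fun n => n ≤ -1) c) + Emul (-1) 0 (proj1 (fun n => n = 0) c)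
    + Emul (-1) (-1) (proj1 (fun n => 1 ≤ n) c) + Emul 1 (-1) (proj1 (fun n => n ≤ -2) c)
    + Emul 1 0 (proj1 (fun n => n = -1) c) + Emul 1 1 (proj1 (fun n => 0 ≤ n) c)

/-- The tunneling operator
`H_{S¹,T} = A₀ P²_{{0}} + A₊ P²_{[1,∞)} + A₋₁ P²_{{−1}} + A₋ P²_{(−∞,−2]}`. -/
def tunnelS1 (c : Coef) : Coef :=
  opA0 (proj2 (fun m => m = 0) c) + opAplus (proj2 (fun m => 1 ≤ m) c)
    + opAm1 (proj2 (fun m => m = -1) c) + opAminus (proj2 (fun m => m ≤ -2) c)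

/-- Fourier coefficient of the single exponential `e_{n,m}(θ₁,θ₂) = e^{i(nθ₁+mθ₂)}`. -/
def cdelta (n m : ℤ) : Coef := fun p => if p = (n, m) then 1 else 0

/-- The trigonometric polynomial with coefficients `c`, as a function of `(θ₁, θ₂)`. -/
def realize (c : Coef) (θ₁ θ₂ : ℝ) : ℂ :=
  ∑ᶠ p : ℤ × ℤ, c p * Complex.exp (Complex.I * ((p.1 : ℂ) * (θ₁ : ℂ) + (p.2 : ℂ) * (θ₂ : ℂ)))


/-!
The vector `ψ` is a finite combination of the modes `e_{n,k-n}`, and `realize ∘ H_{S¹,T}` is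
linear on finitely supported coefficient families, so it suffices to follow each mode. For
`m ≥ 1` the operator sends `e_p`, `p = (n,m)`, to the two neighbouring modes `e_{p-q} + e_{p+q}`,
with `q = (1,-1)`, `(1,1)` or `(1,0)` according as `n > 0`, `n < 0` or `n = 0` (for `n = 0` the
centre is `p = (0,m-1)`), and `e^{i(x-y)} + e^{i(x+y)} = 2 cos y · e^{ix}` turns each such pair
into a cosine multiple of a single mode. The boundary modes `e_{±k,0}` are only shifted, to
`e_{±(k-1),1}`.
-/

open Function Complex

def trigPoly : Submodule ℂ Coef where
  carrier := {c | HasFiniteSupport c}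
  add_mem' hc hd := HasFiniteSupport.add hc hd
  zero_mem' := by simp [HasFiniteSupport]
  smul_mem' t _ hc := HasFiniteSupport.smul_right (fun _ => t) hc

lemma cdelta_mem_trigPoly (n m : ℤ) : cdelta n m ∈ trigPoly :=
  (Set.finite_singleton (n, m)).subset fun p hp => by by_contra h; simp_all [cdelta]

section Projections

variable (S : ℤ → Prop) [DecidablePred S] (a b : ℤ) {c : Coef}

lemma proj1_mem_trigPoly (hc : c ∈ trigPoly) : proj1 S c ∈ trigPoly :=
  Set.Finite.subset hc fun p hp => by by_contra h; simp_all [proj1]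

lemma proj2_mem_trigPoly (hc : c ∈ trigPoly) : proj2 S c ∈ trigPoly :=
  Set.Finite.subset hc fun p hp => by by_contra h; simp_all [proj2]

lemma Emul_mem_trigPoly (hc : c ∈ trigPoly) : Emul a b c ∈ trigPoly :=
  HasFiniteSupport.comp_of_injective (f := c) (g := fun p : ℤ × ℤ => (p.1 - a, p.2 - b))
    (fun p q h => by simp only [Prod.mk.injEq, sub_left_inj] at h; exact Prod.ext h.1 h.2) hc

variable (n m : ℤ) (t : ℂ) (c) (d : Coef)

lemma proj1_add : proj1 S (c + d) = proj1 S c + proj1 S d := by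
  ext p; simp only [proj1, Pi.add_apply]; split_ifs <;> simp

lemma proj2_add : proj2 S (c + d) = proj2 S c + proj2 S d := by
  ext p; simp only [proj2, Pi.add_apply]; split_ifs <;> simp

lemma Emul_add : Emul a b (c + d) = Emul a b c + Emul a b d := rfl

lemma proj1_smul : proj1 S (t • c) = t • proj1 S c := by
  ext p; simp only [proj1, Pi.smul_apply, smul_eq_mul]; split_ifs <;> simp

lemma proj2_smul : proj2 S (t • c) = t • proj2 S c := by
  ext p; simp only [proj2, Pi.smul_apply, smul_eq_mul]; split_ifs <;> simp

lemma Emul_smul : Emul a b (t • c) = t • Emul a b c := rfl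

lemma proj1_zero : proj1 S 0 = 0 := by ext p; simp [proj1]

lemma Emul_zero : Emul a b 0 = 0 := rfl

lemma proj1_cdelta : proj1 S (cdelta n m) = if S n then cdelta n m else 0 := by
  ext p; rcases eq_or_ne p (n, m) with rfl | hp <;> by_cases h : S n <;> simp [proj1, cdelta, *]

lemma proj2_cdelta : proj2 S (cdelta n m) = if S m then cdelta n m else 0 := by
  ext p; rcases eq_or_ne p (n, m) with rfl | hp <;> by_cases h : S m <;> simp [proj2, cdelta, *]

lemma Emul_cdelta : Emul a b (cdelta n m) = cdelta (n + a) (m + b) := by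
  ext p; simp only [Emul, cdelta, Prod.ext_iff, sub_eq_iff_eq_add]

end Projections

lemma tunnelS1_mem_trigPoly {c : Coef} (hc : c ∈ trigPoly) : tunnelS1 c ∈ trigPoly := by
  unfold tunnelS1 opA0 opAplus opAm1 opAminus
  apply_rules (maxDepth := 100) [add_mem, Emul_mem_trigPoly, proj1_mem_trigPoly,
    proj2_mem_trigPoly]

def tunnelS1ₗ : Coef →ₗ[ℂ] Coef where
  toFun := tunnelS1
  map_add' c d := by
    simp only [tunnelS1, opA0, opAplus, opAm1, opAminus, proj1_add, proj2_add, Emul_add]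
    abel
  map_smul' t c := by
    simp only [tunnelS1, opA0, opAplus, opAm1, opAminus, proj1_smul, proj2_smul, Emul_smul,
      RingHom.id_apply, smul_add]

lemma tunnelS1_add (c d : Coef) : tunnelS1 (c + d) = tunnelS1 c + tunnelS1 d :=
  map_add tunnelS1ₗ c d

lemma tunnelS1_smul (t : ℂ) (c : Coef) : tunnelS1 (t • c) = t • tunnelS1 c :=
  map_smul tunnelS1ₗ t c

lemma tunnelS1_sum {ι : Type*} (s : Finset ι) (f : ι → Coef) :
    tunnelS1 (∑ i ∈ s, f i) = ∑ i ∈ s, tunnelS1 (f i) :=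
  map_sum tunnelS1ₗ f s

section Modes

variable {n m : ℤ}

lemma tunnelS1_cdelta_of_pos_of_pos (hn : 1 ≤ n) (hm : 1 ≤ m) :
    tunnelS1 (cdelta n m) = cdelta (n - 1) (m + 1) + cdelta (n + 1) (m - 1) := by
  simp (disch := omega) only [tunnelS1, opA0, opAplus, opAm1, opAminus, proj2_cdelta,
    proj1_cdelta, Emul_cdelta, if_pos, if_neg, Emul_zero, proj1_zero, add_zero, zero_add,
    sub_eq_add_neg]

lemma tunnelS1_cdelta_of_neg_of_pos (hn : n ≤ -1) (hm : 1 ≤ m) :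
    tunnelS1 (cdelta n m) = cdelta (n + 1) (m + 1) + cdelta (n - 1) (m - 1) := by
  simp (disch := omega) only [tunnelS1, opA0, opAplus, opAm1, opAminus, proj2_cdelta,
    proj1_cdelta, Emul_cdelta, if_pos, if_neg, Emul_zero, proj1_zero, add_zero, zero_add,
    sub_eq_add_neg]
  abel

lemma tunnelS1_cdelta_zero_of_pos (hm : 1 ≤ m) :
    tunnelS1 (cdelta 0 m) = cdelta (-1) (m - 1) + cdelta 1 (m - 1) := by
  simp (disch := omega) only [tunnelS1, opA0, opAplus, opAm1, opAminus, proj2_cdelta,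
    proj1_cdelta, Emul_cdelta, if_pos, if_neg, Emul_zero, proj1_zero, add_zero, zero_add,
    sub_eq_add_neg]

lemma tunnelS1_cdelta_of_pos_zero (hn : 1 ≤ n) :
    tunnelS1 (cdelta n 0) = cdelta (n - 1) 1 := by
  simp (disch := omega) only [tunnelS1, opA0, opAplus, opAm1, opAminus, proj2_cdelta,
    proj1_cdelta, Emul_cdelta, if_pos, if_neg, if_true, Emul_zero, proj1_zero, add_zero,
    zero_add, sub_eq_add_neg]

lemma tunnelS1_cdelta_of_neg_zero (hn : n ≤ -1) :
    tunnelS1 (cdelta n 0) = cdelta (n + 1) 1 := by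
  simp (disch := omega) only [tunnelS1, opA0, opAplus, opAm1, opAminus, proj2_cdelta,
    proj1_cdelta, Emul_cdelta, if_pos, if_neg, if_true, Emul_zero, proj1_zero, add_zero,
    zero_add]

end Modes

lemma two_cos_mul_exp_I_mul (x y : ℂ) :
    2 * cos y * exp (I * x) = exp (I * (x - y)) + exp (I * (x + y)) := by
  rw [cos, mul_div_cancel₀ _ two_ne_zero, add_mul, ← exp_add, ← exp_add, add_comm]
  ring_nf

section Realize

variable (θ₁ θ₂ : ℝ)

lemma realize_add {c d : Coef} (hc : c ∈ trigPoly) (hd : d ∈ trigPoly) :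
    realize (c + d) θ₁ θ₂ = realize c θ₁ θ₂ + realize d θ₁ θ₂ := by
  simp only [realize, Pi.add_apply, add_mul]
  exact finsum_add_distrib (HasFiniteSupport.mul_left (f := c) hc _)
    (HasFiniteSupport.mul_left (f := d) hd _)

lemma realize_smul (t : ℂ) (c : Coef) : realize (t • c) θ₁ θ₂ = t * realize c θ₁ θ₂ := by
  simp only [realize, mul_finsum, Pi.smul_apply, smul_eq_mul, mul_assoc]

lemma realize_sum {ι : Type*} (s : Finset ι) {f : ι → Coef} (hf : ∀ i ∈ s, f i ∈ trigPoly) :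
    realize (∑ i ∈ s, f i) θ₁ θ₂ = ∑ i ∈ s, realize (f i) θ₁ θ₂ := by
  classical
  induction s using Finset.induction_on with
  | empty => simpa using realize_smul θ₁ θ₂ 0 0
  | insert i s hi ih =>
    rw [Finset.forall_mem_insert] at hf
    rw [Finset.sum_insert hi, Finset.sum_insert hi,
      realize_add _ _ hf.1 (Submodule.sum_mem _ hf.2), ih hf.2]

lemma realize_cdelta (n m : ℤ) :
    realize (cdelta n m) θ₁ θ₂ = exp (I * (n * θ₁ + m * θ₂)) := by
  rw [realize, finsum_eq_single _ (n, m) fun p hp => by simp [cdelta, hp]]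
  simp [cdelta]

lemma realize_cdelta_sub_add_cdelta_add (n m a b : ℤ) :
    realize (cdelta (n - a) (m - b) + cdelta (n + a) (m + b)) θ₁ θ₂
      = 2 * cos (a * θ₁ + b * θ₂) * realize (cdelta n m) θ₁ θ₂ := by
  rw [realize_add _ _ (cdelta_mem_trigPoly _ _) (cdelta_mem_trigPoly _ _), realize_cdelta,
    realize_cdelta, realize_cdelta, two_cos_mul_exp_I_mul]
  push_cast
  ring_nf

lemma realize_tunnelS1_add {c d : Coef} (hc : c ∈ trigPoly) (hd : d ∈ trigPoly) :
    realize (tunnelS1 (c + d)) θ₁ θ₂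
      = realize (tunnelS1 c) θ₁ θ₂ + realize (tunnelS1 d) θ₁ θ₂ := by
  rw [tunnelS1_add, realize_add _ _ (tunnelS1_mem_trigPoly hc) (tunnelS1_mem_trigPoly hd)]

lemma realize_tunnelS1_smul (t : ℂ) (c : Coef) :
    realize (tunnelS1 (t • c)) θ₁ θ₂ = t * realize (tunnelS1 c) θ₁ θ₂ := by
  rw [tunnelS1_smul, realize_smul]

lemma realize_tunnelS1_sum_smul {ι : Type*} (s : Finset ι) (a : ι → ℂ) {f : ι → Coef}
    (hf : ∀ i ∈ s, f i ∈ trigPoly) :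
    realize (tunnelS1 (∑ i ∈ s, a i • f i)) θ₁ θ₂
      = ∑ i ∈ s, a i * realize (tunnelS1 (f i)) θ₁ θ₂ := by
  rw [tunnelS1_sum, realize_sum _ _ _ fun i hi =>
    tunnelS1_mem_trigPoly (Submodule.smul_mem _ _ (hf i hi))]
  exact Finset.sum_congr rfl fun i _ => realize_tunnelS1_smul θ₁ θ₂ (a i) (f i)

variable {n m : ℤ}

lemma realize_tunnelS1_cdelta_of_pos_of_pos (hn : 1 ≤ n) (hm : 1 ≤ m) :
    realize (tunnelS1 (cdelta n m)) θ₁ θ₂ = 2 * cos (θ₁ - θ₂) * realize (cdelta n m) θ₁ θ₂ := by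
  rw [tunnelS1_cdelta_of_pos_of_pos hn hm]
  convert realize_cdelta_sub_add_cdelta_add θ₁ θ₂ n m 1 (-1) using 4 <;> push_cast <;> ring

lemma realize_tunnelS1_cdelta_of_neg_of_pos (hn : n ≤ -1) (hm : 1 ≤ m) :
    realize (tunnelS1 (cdelta n m)) θ₁ θ₂ = 2 * cos (θ₁ + θ₂) * realize (cdelta n m) θ₁ θ₂ := by
  rw [tunnelS1_cdelta_of_neg_of_pos hn hm, add_comm]
  convert realize_cdelta_sub_add_cdelta_add θ₁ θ₂ n m 1 1 using 4
  push_cast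
  ring

lemma realize_tunnelS1_cdelta_zero_of_pos (hm : 1 ≤ m) :
    realize (tunnelS1 (cdelta 0 m)) θ₁ θ₂ = 2 * cos θ₁ * realize (cdelta 0 (m - 1)) θ₁ θ₂ := by
  rw [tunnelS1_cdelta_zero_of_pos hm]
  convert realize_cdelta_sub_add_cdelta_add θ₁ θ₂ 0 (m - 1) 1 0 using 4 <;> push_cast <;> ring

lemma sum_mul_realize_tunnelS1_cdelta_of_pos (k : ℤ) (a : ℤ → ℂ) :
    ∑ n ∈ Finset.Icc 1 (k - 1), a n * realize (tunnelS1 (cdelta n (k - n))) θ₁ θ₂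
      = 2 * cos (θ₁ - θ₂) * ∑ n ∈ Finset.Icc 1 (k - 1),
          a n * exp (I * (n * θ₁)) * exp (I * ((k - n) * θ₂)) := by
  rw [Finset.mul_sum]
  refine Finset.sum_congr rfl fun n hn => ?_
  rw [Finset.mem_Icc] at hn
  rw [realize_tunnelS1_cdelta_of_pos_of_pos θ₁ θ₂ (by omega) (by omega), realize_cdelta, mul_add,
    exp_add]
  push_cast
  ring

lemma sum_mul_realize_tunnelS1_cdelta_of_neg (k : ℤ) (a : ℤ → ℂ) :
    ∑ n ∈ Finset.Icc 1 (k - 1), a n * realize (tunnelS1 (cdelta (-n) (k - n))) θ₁ θ₂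
      = 2 * cos (θ₁ + θ₂) * ∑ n ∈ Finset.Icc 1 (k - 1),
          a n * exp (-(I * (n * θ₁))) * exp (I * ((k - n) * θ₂)) := by
  rw [Finset.mul_sum]
  refine Finset.sum_congr rfl fun n hn => ?_
  rw [Finset.mem_Icc] at hn
  rw [realize_tunnelS1_cdelta_of_neg_of_pos θ₁ θ₂ (by omega) (by omega), realize_cdelta, mul_add,
    exp_add]
  push_cast
  ring_nf

end Realize

/-- action of `H_{S¹,T}` on the fiber `L_{2k}`. -/
theorem stmt12 (k : ℤ) (hk : 2 ≤ k) (a0 : ℂ) (ap am : ℤ → ℂ) (θ₁ θ₂ : ℝ) :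
    realize (tunnelS1 ((∑ n ∈ Finset.Icc (1 : ℤ) k, ap n • cdelta n (k - n))
        + (∑ n ∈ Finset.Icc (1 : ℤ) k, am n • cdelta (-n) (k - n))
        + a0 • cdelta 0 k)) θ₁ θ₂
      = am k * Complex.exp (Complex.I * ((θ₁ : ℂ) + (θ₂ : ℂ)))
            * Complex.exp (-(Complex.I * ((k : ℂ) * (θ₁ : ℂ))))
        + ap k * Complex.exp (-(Complex.I * ((θ₁ : ℂ) - (θ₂ : ℂ))))
            * Complex.exp (Complex.I * ((k : ℂ) * (θ₁ : ℂ)))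
        + 2 * Complex.cos (θ₁ : ℂ) * a0
            * Complex.exp (Complex.I * (((k : ℂ) - 1) * (θ₂ : ℂ)))
        + 2 * Complex.cos ((θ₁ : ℂ) + (θ₂ : ℂ))
            * ∑ n ∈ Finset.Icc (1 : ℤ) (k - 1), am n
                * Complex.exp (-(Complex.I * ((n : ℂ) * (θ₁ : ℂ))))
                * Complex.exp (Complex.I * (((k : ℂ) - (n : ℂ)) * (θ₂ : ℂ)))
        + 2 * Complex.cos ((θ₁ : ℂ) - (θ₂ : ℂ))
            * ∑ n ∈ Finset.Icc (1 : ℤ) (k - 1), ap n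
                * Complex.exp (Complex.I * ((n : ℂ) * (θ₁ : ℂ)))
                * Complex.exp (Complex.I * (((k : ℂ) - (n : ℂ)) * (θ₂ : ℂ))) := by
  have hap : realize (cdelta (k - 1) 1) θ₁ θ₂ = exp (-(I * (θ₁ - θ₂))) * exp (I * (k * θ₁)) := by
    rw [realize_cdelta, ← exp_add]; push_cast; ring_nf
  have ham : realize (cdelta (-k + 1) 1) θ₁ θ₂ = exp (I * (θ₁ + θ₂)) * exp (-(I * (k * θ₁))) := by
    rw [realize_cdelta, ← exp_add]; push_cast; ring_nf
  have ha0 : realize (cdelta 0 (k - 1)) θ₁ θ₂ = exp (I * ((k - 1) * θ₂)) := by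
    rw [realize_cdelta]; push_cast; ring_nf
  rw [← Finset.insert_Icc_sub_one_right_eq_Icc (by omega : (1 : ℤ) ≤ k),
    Finset.sum_insert (by simp), Finset.sum_insert (by simp), sub_self,
    realize_tunnelS1_add, realize_tunnelS1_add, realize_tunnelS1_add, realize_tunnelS1_add,
    realize_tunnelS1_sum_smul, realize_tunnelS1_sum_smul, realize_tunnelS1_smul,
    realize_tunnelS1_smul, realize_tunnelS1_smul]
  · rw [tunnelS1_cdelta_of_pos_zero (by omega), tunnelS1_cdelta_of_neg_zero (by omega),
      realize_tunnelS1_cdelta_zero_of_pos θ₁ θ₂ (by omega), sum_mul_realize_tunnelS1_cdelta_of_pos,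
      sum_mul_realize_tunnelS1_cdelta_of_neg, hap, ham, ha0]
    ring
  all_goals solve_by_elim (maxDepth := 20) [add_mem, Submodule.smul_mem, Submodule.sum_mem,
    cdelta_mem_trigPoly]
end
end

section
/- Let α, Φ ∈ ℝ, let k ≥ 2 be an integer, and let a₀, a₁, …, a_{k−1} ∈ ℂ. Define the standing wave ψ(θ₁,θ₂) = Σ_{n=1}^{k−1} a_n (e^{inθ₁} + e^{−inθ₁}) e^{i(k−n)θ₂} + a₀ e^{ikθ₂} and the function χ_Φ(θ₁,θ₂) = 2α [ sin(θ₁−Φ) a₀ e^{i(k−1)θ₂} + sin(θ₁−Φ+θ₂) Σ_{n=1}^{k−1} a_n e^{−inθ₁} e^{i(k−n)θ₂} + sin(θ₁−Φ−θ₂) Σ_{n=1}^{k−1} a_n e^{inθ₁} e^{i(k−n)θ₂} ]. Then ∫₀^{2π}∫₀^{2π} conj(ψ(θ₁,θ₂)) · χ_Φ(θ₁,θ₂) dθ₁ dθ₂ = −8πα C sin Φ, where C = 2π · Re( Σ_{n=0}^{k−2} conj(a_{n+1}) a_n ). -/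
noncomputable section

/-- The standing wave
`ψ(θ₁,θ₂) = Σ_{n=1}^{k−1} aₙ (e^{inθ₁}+e^{−inθ₁}) e^{i(k−n)θ₂} + a₀ e^{ikθ₂}`. -/
def psiEven (k : ℕ) (a : ℕ → ℂ) (θ₁ θ₂ : ℝ) : ℂ :=
  (∑ n ∈ Finset.Icc 1 (k - 1), a n
      * (Complex.exp (Complex.I * ((n : ℂ) * (θ₁ : ℂ)))
          + Complex.exp (-(Complex.I * ((n : ℂ) * (θ₁ : ℂ)))))
      * Complex.exp (Complex.I * (((k - n : ℕ) : ℂ) * (θ₂ : ℂ))))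
    + a 0 * Complex.exp (Complex.I * ((k : ℂ) * (θ₂ : ℂ)))

/-- The Josephson current `I_{S¹}(Φ)` applied to the standing wave `psiEven`. -/
def chiEven (α Φ : ℝ) (k : ℕ) (a : ℕ → ℂ) (θ₁ θ₂ : ℝ) : ℂ :=
  2 * (α : ℂ) *
    (Complex.sin ((θ₁ : ℂ) - (Φ : ℂ)) * a 0
        * Complex.exp (Complex.I * (((k - 1 : ℕ) : ℂ) * (θ₂ : ℂ)))
      + Complex.sin ((θ₁ : ℂ) - (Φ : ℂ) + (θ₂ : ℂ))
        * ∑ n ∈ Finset.Icc 1 (k - 1), a n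
            * Complex.exp (-(Complex.I * ((n : ℂ) * (θ₁ : ℂ))))
            * Complex.exp (Complex.I * (((k - n : ℕ) : ℂ) * (θ₂ : ℂ)))
      + Complex.sin ((θ₁ : ℂ) - (Φ : ℂ) - (θ₂ : ℂ))
        * ∑ n ∈ Finset.Icc 1 (k - 1), a n
            * Complex.exp (Complex.I * ((n : ℂ) * (θ₁ : ℂ)))
            * Complex.exp (Complex.I * (((k - n : ℕ) : ℂ) * (θ₂ : ℂ))))

/-- The one-mode shifted standing wave
`ψ(θ₁,θ₂) = Σ_{n=0}^{k−2} aₙ (e^{inθ₁}+e^{−i(n+1)θ₁}) e^{−i(k−n)θ₂}`. -/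
def psiOdd (k : ℕ) (a : ℕ → ℂ) (θ₁ θ₂ : ℝ) : ℂ :=
  ∑ n ∈ Finset.range (k - 1), a n
    * (Complex.exp (Complex.I * ((n : ℂ) * (θ₁ : ℂ)))
        + Complex.exp (-(Complex.I * (((n : ℂ) + 1) * (θ₁ : ℂ)))))
    * Complex.exp (-(Complex.I * (((k - n : ℕ) : ℂ) * (θ₂ : ℂ))))

/-- The Josephson current `I_{S¹}(Φ)` applied to the one-mode shifted standing
wave `psiOdd`. -/
def chiOdd (α Φ : ℝ) (k : ℕ) (a : ℕ → ℂ) (θ₁ θ₂ : ℝ) : ℂ :=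
  2 * (α : ℂ) *
    (Complex.sin ((θ₁ : ℂ) - (Φ : ℂ) + (θ₂ : ℂ))
        * ∑ n ∈ Finset.range (k - 1), a n
            * Complex.exp (Complex.I * ((n : ℂ) * (θ₁ : ℂ)))
            * Complex.exp (-(Complex.I * (((k - n : ℕ) : ℂ) * (θ₂ : ℂ))))
      + Complex.sin ((θ₁ : ℂ) - (Φ : ℂ) - (θ₂ : ℂ))
        * ∑ n ∈ Finset.range (k - 1), a n
            * Complex.exp (-(Complex.I * (((n : ℂ) + 1) * (θ₁ : ℂ))))
            * Complex.exp (-(Complex.I * (((k - n : ℕ) : ℂ) * (θ₂ : ℂ)))))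


/-! The standing wave is `ψ = ∑_{|p| ≤ k-1} a_{|p|} E_p` in the modes
`E_p(θ₁, θ₂) = e^{ipθ₁} e^{i(k-|p|)θ₂}`, which are orthogonal on the torus with squared norm
`(2π)²`. The sign of `θ₂` in `sin (θ₁ - Φ ± θ₂)` is exactly the one that keeps the shifted
modes on the line `q = k - |p|`, so the current is a hopping operator:
`χ = ∑_p α a_{|p|} i (e^{iΦ} E_{p-1} - e^{-iΦ} E_{p+1})`. Orthogonality reduces `⟨ψ, χ⟩` to
`(2π)² α i (e^{iΦ} - e^{-iΦ}) = -2 (2π)² α sin Φ` times the hopping sum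
`∑_p conj (a_{|p+1|}) a_{|p|}`. Both hopping directions give this sum (reflect `p ↦ -p`), and
splitting it at `p = 0` gives `B + conj B = 2 Re B` with `B = ∑_n conj (a_{n+1}) a_n`. -/

namespace StandingWave

open Complex ComplexConjugate Finset intervalIntegral

def circleExp (m : ℤ) (θ : ℝ) : ℂ := exp (I * (m * θ))

@[simp]
lemma circleExp_zero (θ : ℝ) : circleExp 0 θ = 1 := by simp [circleExp]

lemma circleExp_add (m n : ℤ) (θ : ℝ) :
    circleExp (m + n) θ = circleExp m θ * circleExp n θ := by
  rw [circleExp, circleExp, circleExp, ← exp_add]; push_cast; ring_nf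

lemma conj_circleExp (m : ℤ) (θ : ℝ) : conj (circleExp m θ) = circleExp (-m) θ := by
  rw [circleExp, ← exp_conj, circleExp]; simp

@[fun_prop]
lemma continuous_circleExp (m : ℤ) : Continuous (circleExp m) := by
  unfold circleExp; fun_prop

lemma integral_circleExp (m : ℤ) :
    ∫ θ in (0 : ℝ)..2 * Real.pi, circleExp m θ =
      if m = 0 then ((2 * Real.pi : ℝ) : ℂ) else 0 := by
  split_ifs with hm
  · simp [hm, circleExp]
  · have hc : I * m ≠ 0 := mul_ne_zero I_ne_zero (Int.cast_ne_zero.mpr hm)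
    simp only [circleExp, ← mul_assoc]
    rw [integral_exp_mul_complex hc,
      show I * m * ((2 * Real.pi : ℝ) : ℂ) = m * (2 * Real.pi * I) by push_cast; ring,
      exp_int_mul_two_pi_mul_I]
    simp

section IteratedIntegral

variable {E : Type*} [NormedAddCommGroup E] [NormedSpace ℝ E]

lemma integral_integral_add {f g : ℝ → ℝ → E} (hf : Continuous (Function.uncurry f))
    (hg : Continuous (Function.uncurry g)) (a b c d : ℝ) :
    ∫ x in a..b, ∫ y in c..d, (f x y + g x y) =
      (∫ x in a..b, ∫ y in c..d, f x y) + ∫ x in a..b, ∫ y in c..d, g x y := by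
  have hy : ∀ h : ℝ → ℝ → E, Continuous (Function.uncurry h) → ∀ x,
      IntervalIntegrable (h x) MeasureTheory.volume c d := fun h hh x =>
    (hh.comp (Continuous.prodMk_right x)).intervalIntegrable c d
  have hx : ∀ h : ℝ → ℝ → E, Continuous (Function.uncurry h) →
      IntervalIntegrable (fun x => ∫ y in c..d, h x y) MeasureTheory.volume a b := fun h hh =>
    (continuous_parametric_intervalIntegral_of_continuous' hh c d).intervalIntegrable a b
  simp only [integral_add (hy f hf _) (hy g hg _)]
  exact integral_add (hx f hf) (hx g hg)

lemma integral_integral_finset_sum {ι : Type*} (s : Finset ι) {f : ι → ℝ → ℝ → E}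
    (hf : ∀ i, Continuous (Function.uncurry (f i))) (a b c d : ℝ) :
    ∫ x in a..b, ∫ y in c..d, ∑ i ∈ s, f i x y =
      ∑ i ∈ s, ∫ x in a..b, ∫ y in c..d, f i x y := by
  classical
  induction s using Finset.induction_on with
  | empty => simp
  | insert i s hi ih =>
    simp only [sum_insert hi]
    rw [integral_integral_add (g := fun x y => ∑ j ∈ s, f j x y) (hf i)
      (continuous_finsetSum s fun j _ => hf j), ih]

end IteratedIntegral

lemma integral_integral_const_mul {𝕜 : Type*} [RCLike 𝕜] (z : 𝕜) (f : ℝ → ℝ → 𝕜)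
    (a b c d : ℝ) :
    ∫ x in a..b, ∫ y in c..d, z * f x y = z * ∫ x in a..b, ∫ y in c..d, f x y := by
  simp only [integral_const_mul]

def torusInner (f g : ℝ → ℝ → ℂ) : ℂ :=
  ∫ θ₁ in (0 : ℝ)..2 * Real.pi, ∫ θ₂ in (0 : ℝ)..2 * Real.pi, conj (f θ₁ θ₂) * g θ₁ θ₂

lemma torusInner_add_right {f g h : ℝ → ℝ → ℂ} (hf : Continuous (Function.uncurry f))
    (hg : Continuous (Function.uncurry g)) (hh : Continuous (Function.uncurry h)) :
    torusInner f (fun x y => g x y + h x y) = torusInner f g + torusInner f h := by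
  unfold torusInner
  simp only [mul_add]
  exact integral_integral_add (by fun_prop) (by fun_prop) _ _ _ _

lemma torusInner_sum_left {ι : Type*} (s : Finset ι) (c : ι → ℂ) {f : ι → ℝ → ℝ → ℂ}
    {g : ℝ → ℝ → ℂ} (hf : ∀ i, Continuous (Function.uncurry (f i)))
    (hg : Continuous (Function.uncurry g)) :
    torusInner (fun x y => ∑ i ∈ s, c i * f i x y) g =
      ∑ i ∈ s, conj (c i) * torusInner (f i) g := by
  have hfg : ∀ i, Continuous (Function.uncurry fun x y => conj (c i) * (conj (f i x y) * g x y)) :=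
    fun i => by have := hf i; fun_prop
  simp only [torusInner, ← integral_integral_const_mul, ← integral_integral_finset_sum s hfg]
  simp only [map_sum, map_mul, sum_mul, mul_assoc]

lemma torusInner_sum_right {ι : Type*} (s : Finset ι) (c : ι → ℂ) {f : ℝ → ℝ → ℂ}
    {g : ι → ℝ → ℝ → ℂ} (hf : Continuous (Function.uncurry f))
    (hg : ∀ i, Continuous (Function.uncurry (g i))) :
    torusInner f (fun x y => ∑ i ∈ s, c i * g i x y) = ∑ i ∈ s, c i * torusInner f (g i) := by
  have hfg : ∀ i, Continuous (Function.uncurry fun x y => c i * (conj (f x y) * g i x y)) :=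
    fun i => by have := hg i; fun_prop
  simp only [torusInner, ← integral_integral_const_mul, ← integral_integral_finset_sum s hfg]
  simp only [mul_sum, mul_left_comm]

def mode (k : ℕ) (p : ℤ) (θ₁ θ₂ : ℝ) : ℂ := circleExp p θ₁ * circleExp (k - p.natAbs) θ₂

@[fun_prop]
lemma continuous_mode (k : ℕ) (p : ℤ) : Continuous (Function.uncurry (mode k p)) := by
  unfold mode; fun_prop

lemma torusInner_mode_mode (k : ℕ) (p q : ℤ) :
    torusInner (mode k p) (mode k q) = if p = q then ((2 * Real.pi : ℝ) : ℂ) ^ 2 else 0 := by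
  have h : ∀ θ₁ θ₂, conj (mode k p θ₁ θ₂) * mode k q θ₁ θ₂ =
      circleExp (q - p) θ₁ * circleExp (p.natAbs - q.natAbs) θ₂ := fun θ₁ θ₂ => by
    rw [show q - p = -p + q by ring,
      show (p.natAbs - q.natAbs : ℤ) = -(k - p.natAbs) + (k - q.natAbs) by ring,
      circleExp_add, circleExp_add, mode, mode, map_mul, conj_circleExp, conj_circleExp]
    ring
  simp only [torusInner, h, integral_const_mul, integral_mul_const, integral_circleExp]
  by_cases hpq : p = q
  · simp [hpq, sq]
  · simp [hpq, sub_eq_zero, Ne.symm hpq]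

lemma mode_eq_circleExp_mul_mode {k : ℕ} {p q d e : ℤ} (hd : q - p = d)
    (he : (p.natAbs - q.natAbs : ℤ) = e) (θ₁ θ₂ : ℝ) :
    mode k q θ₁ θ₂ = circleExp d θ₁ * circleExp e θ₂ * mode k p θ₁ θ₂ := by
  have h₁ : circleExp q θ₁ = circleExp d θ₁ * circleExp p θ₁ := by
    rw [← circleExp_add, ← hd, sub_add_cancel]
  have h₂ : circleExp (k - q.natAbs) θ₂ = circleExp e θ₂ * circleExp (k - p.natAbs) θ₂ := by
    rw [← circleExp_add, ← he]; ring_nf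
  rw [mode, mode, h₁, h₂]
  ring

lemma mode_natCast {k n : ℕ} (h : n ≤ k) (θ₁ θ₂ : ℝ) :
    mode k n θ₁ θ₂ = exp (I * (n * θ₁)) * exp (I * ((k - n : ℕ) * θ₂)) := by
  simp [mode, circleExp, Nat.cast_sub h]

lemma mode_neg_natCast {k n : ℕ} (h : n ≤ k) (θ₁ θ₂ : ℝ) :
    mode k (-n) θ₁ θ₂ = exp (-(I * (n * θ₁))) * exp (I * ((k - n : ℕ) * θ₂)) := by
  simp [mode, circleExp, Nat.cast_sub h]

lemma sum_Icc_neg_eq_add_sum_Icc_one {M : Type*} [AddCommMonoid M] (f : ℤ → M) (K : ℕ) :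
    ∑ p ∈ Icc (-(K : ℤ)) K, f p = f 0 + ∑ n ∈ Icc 1 K, (f n + f (-n)) := by
  induction K with
  | zero => simp
  | succ K ih =>
    have hIcc : Icc (-((K + 1 : ℕ) : ℤ)) (K + 1 : ℕ) =
        insert ((K + 1 : ℕ) : ℤ) (insert (-((K + 1 : ℕ) : ℤ)) (Icc (-(K : ℤ)) K)) := by
      ext p; simp only [mem_insert, mem_Icc]; omega
    rw [hIcc, sum_insert (by simp; omega), sum_insert (by simp), ih,
      sum_Icc_succ_top (by omega)]
    abel

lemma psiEven_eq_sum_mode (K : ℕ) (a : ℕ → ℂ) (θ₁ θ₂ : ℝ) :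
    psiEven (K + 1) a θ₁ θ₂ = ∑ p ∈ Icc (-(K : ℤ)) K, a p.natAbs * mode (K + 1) p θ₁ θ₂ := by
  rw [sum_Icc_neg_eq_add_sum_Icc_one, psiEven, add_comm, Nat.add_sub_cancel]
  congr 1
  · simp [mode, circleExp]
  · refine sum_congr rfl fun n hn => ?_
    have hnK : n ≤ K + 1 := (mem_Icc.mp hn).2.trans K.le_succ
    rw [mode_natCast hnK, mode_neg_natCast hnK, Int.natAbs_neg, Int.natAbs_natCast]
    ring

lemma two_mul_sin_eq_circleExp (θ₁ θ₂ Φ : ℝ) (m : ℤ) :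
    2 * sin (θ₁ - Φ + m * θ₂) = I * (exp (Φ * I) * circleExp (-1) θ₁ * circleExp (-m) θ₂
      - exp (-Φ * I) * circleExp 1 θ₁ * circleExp m θ₂) := by
  simp only [Complex.sin, circleExp, ← exp_add]
  push_cast
  ring_nf

lemma chiEven_eq_sum_mode (α Φ : ℝ) (K : ℕ) (a : ℕ → ℂ) (θ₁ θ₂ : ℝ) :
    chiEven α Φ (K + 1) a θ₁ θ₂ =
      (∑ q ∈ Icc (-(K : ℤ)) K, α * I * exp (Φ * I) * a q.natAbs * mode (K + 1) (q - 1) θ₁ θ₂) +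
      ∑ q ∈ Icc (-(K : ℤ)) K,
        -(α * I * exp (-Φ * I)) * a q.natAbs * mode (K + 1) (q + 1) θ₁ θ₂ := by
  rw [← sum_add_distrib (s := Icc (-(K : ℤ)) K), sum_Icc_neg_eq_add_sum_Icc_one, chiEven,
    Nat.add_sub_cancel]
  simp only [mul_add, mul_sum]
  rw [add_assoc, ← sum_add_distrib]
  have hsin₁ := two_mul_sin_eq_circleExp θ₁ θ₂ Φ 1
  have hsin₂ := two_mul_sin_eq_circleExp θ₁ θ₂ Φ (-1)
  have hsin₀ := two_mul_sin_eq_circleExp θ₁ θ₂ Φ 0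
  push_cast at hsin₁ hsin₂ hsin₀
  simp only [one_mul, neg_one_mul, ← sub_eq_add_neg, zero_mul, add_zero, neg_zero,
    circleExp_zero, mul_one] at hsin₁ hsin₂ hsin₀
  congr 1
  · have h₁ : mode (K + 1) (0 - 1) θ₁ θ₂ = circleExp (-1) θ₁ * exp (I * (K * θ₂)) := by
      simp [mode, circleExp]
    have h₂ : mode (K + 1) (0 + 1) θ₁ θ₂ = circleExp 1 θ₁ * exp (I * (K * θ₂)) := by
      simp [mode, circleExp]
    rw [h₁, h₂, Int.natAbs_zero]
    linear_combination (α * a 0 * exp (I * (K * θ₂))) * hsin₀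
  · refine sum_congr rfl fun n hn => ?_
    obtain ⟨hn₁, hnK⟩ := mem_Icc.mp hn
    simp only [mul_assoc]
    rw [mode_eq_circleExp_mul_mode (p := n) (q := n - 1) (d := -1) (e := 1) (by ring) (by omega),
      mode_eq_circleExp_mul_mode (p := n) (q := n + 1) (d := 1) (e := -1) (by ring) (by omega),
      mode_eq_circleExp_mul_mode (p := -n) (q := -n - 1) (d := -1) (e := -1) (by ring) (by omega),
      mode_eq_circleExp_mul_mode (p := -n) (q := -n + 1) (d := 1) (e := 1) (by ring) (by omega),
      ← mode_natCast (by omega), ← mode_neg_natCast (by omega), Int.natAbs_neg,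
      Int.natAbs_natCast]
    linear_combination (α * a n * mode (K + 1) (-n) θ₁ θ₂) * hsin₁ +
      (α * a n * mode (K + 1) n θ₁ θ₂) * hsin₂

lemma torusInner_psiEven_mode (K : ℕ) (a : ℕ → ℂ) (r : ℤ) :
    torusInner (psiEven (K + 1) a) (mode (K + 1) r) =
      ((2 * Real.pi : ℝ) : ℂ) ^ 2 * if r ∈ Icc (-(K : ℤ)) K then conj (a r.natAbs) else 0 := by
  rw [show psiEven (K + 1) a = _ from funext₂ (psiEven_eq_sum_mode K a),
    torusInner_sum_left _ _ (continuous_mode _) (continuous_mode _ _)]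
  simp only [torusInner_mode_mode, mul_ite, mul_zero, sum_ite_eq']
  split_ifs <;> ring

lemma sum_Icc_mul_ite_add_one (K : ℕ) (a : ℕ → ℂ) :
    ∑ q ∈ Icc (-(K : ℤ)) K,
        a q.natAbs * (if q + 1 ∈ Icc (-(K : ℤ)) K then conj (a (q + 1).natAbs) else 0) =
      ∑ q ∈ Ico (-(K : ℤ)) K, conj (a (q + 1).natAbs) * a q.natAbs := by
  simp only [mul_ite, mul_zero]
  rw [← sum_filter]
  refine sum_congr ?_ fun q _ => mul_comm _ _
  ext q; simp only [mem_filter, mem_Icc, mem_Ico]; omega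

lemma sum_Icc_mul_ite_sub_one (K : ℕ) (a : ℕ → ℂ) :
    ∑ q ∈ Icc (-(K : ℤ)) K,
        a q.natAbs * (if q - 1 ∈ Icc (-(K : ℤ)) K then conj (a (q - 1).natAbs) else 0) =
      ∑ q ∈ Ico (-(K : ℤ)) K, conj (a (q + 1).natAbs) * a q.natAbs := by
  rw [← sum_Icc_mul_ite_add_one]
  refine sum_nbij' Neg.neg Neg.neg (fun q hq => by rw [mem_Icc] at hq ⊢; omega)
    (fun q hq => by rw [mem_Icc] at hq ⊢; omega) (fun q _ => neg_neg q) (fun q _ => neg_neg q)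
    fun q _ => ?_
  simp only [mem_Icc, Int.natAbs_neg]
  rw [show (-q + 1).natAbs = (q - 1).natAbs by omega]
  congr 2
  simp only [eq_iff_iff]; omega

lemma sum_Ico_conj_mul (K : ℕ) (a : ℕ → ℂ) :
    ∑ q ∈ Ico (-(K : ℤ)) K, conj (a (q + 1).natAbs) * a q.natAbs =
      (∑ n ∈ range K, conj (a (n + 1)) * a n) + conj (∑ n ∈ range K, conj (a (n + 1)) * a n) := by
  induction K with
  | zero => simp
  | succ K ih =>
    have hIco : Ico (-((K + 1 : ℕ) : ℤ)) (K + 1 : ℕ) =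
        insert (K : ℤ) (insert (-((K + 1 : ℕ) : ℤ)) (Ico (-(K : ℤ)) K)) := by
      ext p; simp only [mem_insert, mem_Ico]; omega
    rw [hIco, sum_insert (by simp; omega), sum_insert (by simp), ih, sum_range_succ]
    rw [show (-((K + 1 : ℕ) : ℤ) + 1).natAbs = K by omega,
      show (-((K + 1 : ℕ) : ℤ)).natAbs = K + 1 by omega,
      show ((K : ℤ) + 1).natAbs = K + 1 by omega, Int.natAbs_natCast]
    simp only [map_add, map_mul, conj_conj]
    ring

lemma torusInner_psiEven_chiEven (α Φ : ℝ) (K : ℕ) (a : ℕ → ℂ) :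
    torusInner (psiEven (K + 1) a) (chiEven α Φ (K + 1) a) =
      -2 * α * sin Φ * ((2 * Real.pi : ℝ) : ℂ) ^ 2 *
        ((∑ n ∈ range K, conj (a (n + 1)) * a n) +
          conj (∑ n ∈ range K, conj (a (n + 1)) * a n)) := by
  have hψ : Continuous (Function.uncurry (psiEven (K + 1) a)) := by
    rw [show psiEven (K + 1) a = _ from funext₂ (psiEven_eq_sum_mode K a)]
    fun_prop
  rw [show chiEven α Φ (K + 1) a = _ from funext₂ (chiEven_eq_sum_mode α Φ K a),
    torusInner_add_right hψ (by fun_prop) (by fun_prop),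
    torusInner_sum_right _ _ hψ (fun _ => continuous_mode _ _),
    torusInner_sum_right _ _ hψ (fun _ => continuous_mode _ _)]
  simp only [torusInner_psiEven_mode]
  have hfactor : ∀ (c : ℂ) (g : ℤ → ℂ), ∑ q ∈ Icc (-(K : ℤ)) K,
      c * a q.natAbs * (((2 * Real.pi : ℝ) : ℂ) ^ 2 * g q) =
        c * ((2 * Real.pi : ℝ) : ℂ) ^ 2 * ∑ q ∈ Icc (-(K : ℤ)) K, a q.natAbs * g q :=
    fun c g => by rw [mul_sum]; exact sum_congr rfl fun _ _ => by ring
  rw [hfactor, hfactor, sum_Icc_mul_ite_sub_one, sum_Icc_mul_ite_add_one, sum_Ico_conj_mul]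
  simp only [Complex.sin]
  ring

end StandingWave

/-- sinusoidal phase dependence of the Josephson current on a
standing wave: `⟨ψ, I_{S¹}(Φ)ψ⟩ = −8πα C sin Φ` with
`C = 2π Re Σ_{n=0}^{k−2} conj(a_{n+1}) a_n`. -/
theorem stmt17 (α Φ : ℝ) (k : ℕ) (hk : 2 ≤ k) (a : ℕ → ℂ) :
    (∫ θ₁ in (0 : ℝ)..(2 * Real.pi), ∫ θ₂ in (0 : ℝ)..(2 * Real.pi),
        (starRingEnd ℂ) (psiEven k a θ₁ θ₂) * chiEven α Φ k a θ₁ θ₂)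
      = ((-8 * Real.pi * α *
            (2 * Real.pi *
              (∑ n ∈ Finset.range (k - 1), (starRingEnd ℂ) (a (n + 1)) * a n).re) *
            Real.sin Φ : ℝ) : ℂ) := by
  obtain ⟨K, rfl⟩ : ∃ K, k = K + 1 := ⟨k - 1, by omega⟩
  change StandingWave.torusInner _ _ = _
  rw [Nat.add_sub_cancel, StandingWave.torusInner_psiEven_chiEven, Complex.add_conj]
  push_cast
  ring
end
end

section
/- Let α, Φ ∈ ℝ, let k ≥ 3 be an integer, and let a₀, a₁, …, a_{k−2} ∈ ℂ. Define the one-mode shifted standing wave ψ(θ₁,θ₂) = Σ_{n=0}^{k−2} a_n (e^{inθ₁} + e^{−i(n+1)θ₁}) e^{−i(k−n)θ₂} and the function χ_Φ(θ₁,θ₂) = 2α [ sin(θ₁−Φ+θ₂) Σ_{n=0}^{k−2} a_n e^{inθ₁} e^{−i(k−n)θ₂} + sin(θ₁−Φ−θ₂) Σ_{n=0}^{k−2} a_n e^{−i(n+1)θ₁} e^{−i(k−n)θ₂} ]. Then ∫₀^{2π}∫₀^{2π} conj(ψ(θ₁,θ₂)) · χ_Φ(θ₁,θ₂) dθ₁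 dθ₂ = −8πα C sin Φ, where C = 2π · Re( Σ_{n=0}^{k−3} conj(a_{n+1}) a_n ). -/
noncomputable section

/-!
Expand everything in the plane waves `e^{i(pθ₁ + qθ₂)}`, which are orthogonal on `[0, 2π]²` with
squared norm `(2π)²`. The `m`-th term of `ψ` is the sum of the plane waves with frequencies
`(m, m - k)` and `(-(m + 1), m - k)`. Writing `sin z = (e^{iz} - e^{-iz}) / 2i`, the factor
`sin (θ₁ - Φ ± θ₂)` turns the `n`-th term into `e^{-iΦ}` times the shifted term (first half at
`n + 1`, second half at `n - 1`) minus `e^{iΦ}` times the oppositely shifted one. The two halves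
never share a frequency (that would need `2m = -1`), so the pairing of the `m`-th term of `ψ`
with the `n`-th term of `χ` vanishes unless `m = n ± 1`, where it is
`-iα (e^{-iΦ} - e^{iΦ}) (2π)² = -2α sin Φ (2π)²`. Summing `conj (a m) * a n` over adjacent pairs
gives `2 Re Σ conj (a (n + 1)) * a n`.
-/

namespace ShiftedStandingWave

open Complex Finset intervalIntegral
open scoped Real ComplexConjugate

lemma integral_integral_add {f g : ℝ → ℝ → ℂ} (hf : Continuous f.uncurry)
    (hg : Continuous g.uncurry) (a b c d : ℝ) :
    (∫ x in a..b, ∫ y in c..d, f x y + g x y)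
      = (∫ x in a..b, ∫ y in c..d, f x y) + ∫ x in a..b, ∫ y in c..d, g x y := by
  have hf₂ (x : ℝ) : Continuous (f x) := hf.comp (Continuous.prodMk_right x)
  have hg₂ (x : ℝ) : Continuous (g x) := hg.comp (Continuous.prodMk_right x)
  simp_rw [integral_add ((hf₂ _).intervalIntegrable c d) ((hg₂ _).intervalIntegrable c d)]
  exact integral_add
    ((continuous_parametric_intervalIntegral_of_continuous' hf c d).intervalIntegrable a b)
    ((continuous_parametric_intervalIntegral_of_continuous' hg c d).intervalIntegrable a b)

lemma integral_integral_finsetSum {ι : Type*} (s : Finset ι) {f : ι → ℝ → ℝ → ℂ}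
    (hf : ∀ i ∈ s, Continuous (f i).uncurry) (a b c d : ℝ) :
    (∫ x in a..b, ∫ y in c..d, ∑ i ∈ s, f i x y)
      = ∑ i ∈ s, ∫ x in a..b, ∫ y in c..d, f i x y := by
  rw [← integral_finsetSum fun i hi =>
    (continuous_parametric_intervalIntegral_of_continuous' (hf i hi) c d).intervalIntegrable a b]
  refine integral_congr fun x _ => integral_finsetSum fun i hi => ?_
  exact ((hf i hi).comp (Continuous.prodMk_right x)).intervalIntegrable c d

lemma integral_integral_const_mul (r : ℂ) (f : ℝ → ℝ → ℂ) (a b c d : ℝ) :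
    (∫ x in a..b, ∫ y in c..d, r * f x y) = r * ∫ x in a..b, ∫ y in c..d, f x y := by
  simp_rw [intervalIntegral.integral_const_mul]

lemma integral_integral_conj_sum_mul_sum {ι κ : Type*} (s : Finset ι) (t : Finset κ)
    (c : ι → ℂ) (d : κ → ℂ) {F : ι → ℝ → ℝ → ℂ} {G : κ → ℝ → ℝ → ℂ}
    (hF : ∀ i, Continuous (F i).uncurry) (hG : ∀ j, Continuous (G j).uncurry) (a b c' d' : ℝ) :
    (∫ x in a..b, ∫ y in c'..d',
        conj (∑ i ∈ s, c i * F i x y) * ∑ j ∈ t, d j * G j x y)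
      = ∑ i ∈ s, ∑ j ∈ t, conj (c i) * d j *
          ∫ x in a..b, ∫ y in c'..d', conj (F i x y) * G j x y := by
  have expand (x y : ℝ) : conj (∑ i ∈ s, c i * F i x y) * ∑ j ∈ t, d j * G j x y
      = ∑ p ∈ s ×ˢ t, conj (c p.1) * d p.2 * (conj (F p.1 x y) * G p.2 x y) := by
    rw [map_sum, sum_mul_sum, sum_product]
    refine sum_congr rfl fun i _ => sum_congr rfl fun j _ => ?_
    rw [map_mul]; ring
  simp_rw [expand]
  rw [integral_integral_finsetSum _ fun p _ => by
    exact continuous_const.mul ((hF p.1).star.mul (hG p.2)), sum_product]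
  simp_rw [integral_integral_const_mul]

def planeWave (x : ℤ × ℤ) (θ₁ θ₂ : ℝ) : ℂ := exp (I * (x.1 * θ₁ + x.2 * θ₂))

lemma continuous_planeWave (x : ℤ × ℤ) : Continuous (planeWave x).uncurry := by
  unfold planeWave Function.uncurry; fun_prop

lemma conj_planeWave_mul_planeWave (x y : ℤ × ℤ) (θ₁ θ₂ : ℝ) :
    conj (planeWave x θ₁ θ₂) * planeWave y θ₁ θ₂ = planeWave (y - x) θ₁ θ₂ := by
  simp only [planeWave, ← exp_conj, ← exp_add, map_mul, map_add, conj_I, conj_ofReal,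
    map_intCast, Prod.fst_sub, Prod.snd_sub, Int.cast_sub]
  congr 1
  ring

lemma integral_exp_I_mul_int (j : ℤ) :
    (∫ θ in (0 : ℝ)..2 * π, exp (I * j * θ)) = if j = 0 then ((2 * π : ℝ) : ℂ) else 0 := by
  split_ifs with hj
  · simp [hj]
  · have hc : I * j ≠ 0 := mul_ne_zero I_ne_zero (Int.cast_ne_zero.mpr hj)
    rw [integral_exp_mul_complex hc]
    have h2π : I * j * (2 * π) = j * (2 * π * I) := by ring
    simp [h2π, exp_int_mul_two_pi_mul_I]

lemma integral_integral_planeWave (x : ℤ × ℤ) :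
    (∫ θ₁ in (0 : ℝ)..2 * π, ∫ θ₂ in (0 : ℝ)..2 * π, planeWave x θ₁ θ₂)
      = if x = 0 then ((2 * π : ℝ) : ℂ) ^ 2 else 0 := by
  have split (θ₁ θ₂ : ℝ) : planeWave x θ₁ θ₂ = exp (I * x.1 * θ₁) * exp (I * x.2 * θ₂) := by
    rw [planeWave, ← exp_add]; ring_nf
  simp_rw [split, intervalIntegral.integral_const_mul, intervalIntegral.integral_mul_const,
    integral_exp_I_mul_int, Prod.ext_iff]
  split_ifs <;> simp_all [sq]

lemma integral_integral_conj_planeWave_mul_planeWave (x y : ℤ × ℤ) :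
    (∫ θ₁ in (0 : ℝ)..2 * π, ∫ θ₂ in (0 : ℝ)..2 * π,
        conj (planeWave x θ₁ θ₂) * planeWave y θ₁ θ₂)
      = if x = y then ((2 * π : ℝ) : ℂ) ^ 2 else 0 := by
  simp_rw [conj_planeWave_mul_planeWave, integral_integral_planeWave, sub_eq_zero, eq_comm]

lemma sin_mul_planeWave (d x : ℤ × ℤ) (Φ θ₁ θ₂ : ℝ) :
    sin (d.1 * θ₁ + d.2 * θ₂ - Φ) * planeWave x θ₁ θ₂
      = -I / 2 * (exp (-(I * Φ)) * planeWave (x + d) θ₁ θ₂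
          - exp (I * Φ) * planeWave (x - d) θ₁ θ₂) := by
  have hplus : exp ((d.1 * θ₁ + d.2 * θ₂ - Φ) * I) * planeWave x θ₁ θ₂
      = exp (-(I * Φ)) * planeWave (x + d) θ₁ θ₂ := by
    simp only [planeWave, ← exp_add, Prod.fst_add, Prod.snd_add, Int.cast_add]
    congr 1; ring
  have hminus : exp (-(d.1 * θ₁ + d.2 * θ₂ - Φ) * I) * planeWave x θ₁ θ₂
      = exp (I * Φ) * planeWave (x - d) θ₁ θ₂ := by
    simp only [planeWave, ← exp_add, Prod.fst_sub, Prod.snd_sub, Int.cast_sub]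
    congr 1; ring
  rw [sin, ← hplus, ← hminus]
  ring

-- The two halves get separate indices because `sin (θ₁ - Φ ± θ₂)` shifts them in opposite
-- directions.
def standingMode (k j l : ℤ) (θ₁ θ₂ : ℝ) : ℂ :=
  planeWave (j, j - k) θ₁ θ₂ + planeWave (-(l + 1), l - k) θ₁ θ₂

lemma continuous_standingMode (k j l : ℤ) : Continuous (standingMode k j l).uncurry :=
  (continuous_planeWave _).add (continuous_planeWave _)

lemma integral_integral_conj_standingMode_mul_standingMode (k m m' j l : ℤ) :
    (∫ θ₁ in (0 : ℝ)..2 * π, ∫ θ₂ in (0 : ℝ)..2 * π,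
        conj (standingMode k m m' θ₁ θ₂) * standingMode k j l θ₁ θ₂)
      = ((2 * π : ℝ) : ℂ) ^ 2 * ((if m = j then 1 else 0) + (if m' = l then 1 else 0)) := by
  have expand (θ₁ θ₂ : ℝ) : conj (standingMode k m m' θ₁ θ₂) * standingMode k j l θ₁ θ₂
      = (conj (planeWave (m, m - k) θ₁ θ₂) * planeWave (j, j - k) θ₁ θ₂
          + conj (planeWave (m, m - k) θ₁ θ₂) * planeWave (-(l + 1), l - k) θ₁ θ₂)
        + (conj (planeWave (-(m' + 1), m' - k) θ₁ θ₂) * planeWave (j, j - k) θ₁ θ₂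
          + conj (planeWave (-(m' + 1), m' - k) θ₁ θ₂) * planeWave (-(l + 1), l - k) θ₁ θ₂) := by
    simp only [standingMode, map_add]; ring
  have hc (x y : ℤ × ℤ) :
      Continuous (Function.uncurry fun θ₁ θ₂ => conj (planeWave x θ₁ θ₂) * planeWave y θ₁ θ₂) :=
    (continuous_planeWave x).star.mul (continuous_planeWave y)
  simp_rw [expand]
  rw [integral_integral_add ?_ ?_, integral_integral_add (hc _ _) (hc _ _),
    integral_integral_add (hc _ _) (hc _ _)]
  · simp only [integral_integral_conj_planeWave_mul_planeWave, Prod.ext_iff]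
    split_ifs <;> first | omega | ring
  all_goals exact (hc _ _).add (hc _ _)

def currentMode (α Φ : ℝ) (k n : ℤ) (θ₁ θ₂ : ℝ) : ℂ :=
  -I * α * (exp (-(I * Φ)) * standingMode k (n + 1) (n - 1) θ₁ θ₂
    - exp (I * Φ) * standingMode k (n - 1) (n + 1) θ₁ θ₂)

lemma continuous_currentMode (α Φ : ℝ) (k n : ℤ) : Continuous (currentMode α Φ k n).uncurry :=
  continuous_const.mul ((continuous_const.mul (continuous_standingMode _ _ _)).sub
    (continuous_const.mul (continuous_standingMode _ _ _)))

lemma integral_integral_conj_standingMode_mul_currentMode (α Φ : ℝ) (k m n : ℤ) :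
    (∫ θ₁ in (0 : ℝ)..2 * π, ∫ θ₂ in (0 : ℝ)..2 * π,
        conj (standingMode k m m θ₁ θ₂) * currentMode α Φ k n θ₁ θ₂)
      = ((-8 * π ^ 2 * α * Real.sin Φ : ℝ) : ℂ)
          * ((if m = n + 1 then 1 else 0) + (if m = n - 1 then 1 else 0)) := by
  have expand (θ₁ θ₂ : ℝ) : conj (standingMode k m m θ₁ θ₂) * currentMode α Φ k n θ₁ θ₂
      = -I * α * exp (-(I * Φ))
          * (conj (standingMode k m m θ₁ θ₂) * standingMode k (n + 1) (n - 1) θ₁ θ₂)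
        + I * α * exp (I * Φ)
          * (conj (standingMode k m m θ₁ θ₂) * standingMode k (n - 1) (n + 1) θ₁ θ₂) := by
    rw [currentMode]; ring
  have hc (j l : ℤ) : Continuous (Function.uncurry fun θ₁ θ₂ =>
      conj (standingMode k m m θ₁ θ₂) * standingMode k j l θ₁ θ₂) :=
    (continuous_standingMode k m m).star.mul (continuous_standingMode k j l)
  simp_rw [expand]
  rw [integral_integral_add ?_ ?_, integral_integral_const_mul, integral_integral_const_mul,
    integral_integral_conj_standingMode_mul_standingMode,
    integral_integral_conj_standingMode_mul_standingMode]
  · have hsin : I * (exp (-(I * Φ)) - exp (I * Φ)) = 2 * sin Φ := by rw [two_sin]; ring_nf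
    rw [add_comm (if m = n - 1 then (1 : ℂ) else 0)]
    set δ : ℂ := (if m = n + 1 then 1 else 0) + if m = n - 1 then 1 else 0
    push_cast
    linear_combination (-4 * π ^ 2 * α * δ) * hsin
  all_goals exact continuous_const.mul (hc _ _)

lemma psiOdd_eq_sum (k : ℕ) (a : ℕ → ℂ) (θ₁ θ₂ : ℝ) :
    psiOdd k a θ₁ θ₂ = ∑ m ∈ range (k - 1), a m * standingMode k m m θ₁ θ₂ := by
  refine sum_congr rfl fun m hm => ?_
  have hmk : m ≤ k := by rw [mem_range] at hm; omega
  rw [mul_assoc, standingMode, planeWave, planeWave, add_mul, ← exp_add, ← exp_add,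
    Nat.cast_sub hmk]
  congr 3 <;> push_cast <;> ring

lemma chiOdd_eq_sum (α Φ : ℝ) (k : ℕ) (a : ℕ → ℂ) (θ₁ θ₂ : ℝ) :
    chiOdd α Φ k a θ₁ θ₂ = ∑ n ∈ range (k - 1), a n * currentMode α Φ k n θ₁ θ₂ := by
  have mode_eq (n : ℕ) (hn : n ∈ range (k - 1)) (u : ℂ) (p : ℤ) (hu : u = p * θ₁) :
      exp (I * u) * exp (-(I * (((k - n : ℕ) : ℂ) * θ₂))) = planeWave (p, n - k) θ₁ θ₂ := by
    have hnk : n ≤ k := by rw [mem_range] at hn; omega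
    rw [planeWave, ← exp_add, hu, Nat.cast_sub hnk]
    congr 1; push_cast; ring
  have hu (n) (hn : n ∈ range (k - 1)) :
      a n * exp (I * (n * θ₁)) * exp (-(I * (((k - n : ℕ) : ℂ) * θ₂)))
        = a n * planeWave (n, n - k) θ₁ θ₂ := by
    rw [mul_assoc, mode_eq n hn _ n (by push_cast; ring)]
  have hv (n) (hn : n ∈ range (k - 1)) :
      a n * exp (-(I * ((n + 1) * θ₁))) * exp (-(I * (((k - n : ℕ) : ℂ) * θ₂)))
        = a n * planeWave (-(n + 1), n - k) θ₁ θ₂ := by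
    rw [mul_assoc, ← mode_eq n hn (-((n + 1) * θ₁)) (-(n + 1)) (by push_cast; ring), mul_neg]
  have hplus : (θ₁ : ℂ) - Φ + θ₂ = ((1, 1) : ℤ × ℤ).1 * θ₁ + ((1, 1) : ℤ × ℤ).2 * θ₂ - Φ := by
    push_cast; ring
  have hminus : (θ₁ : ℂ) - Φ - θ₂ = ((1, -1) : ℤ × ℤ).1 * θ₁ + ((1, -1) : ℤ × ℤ).2 * θ₂ - Φ := by
    push_cast; ring
  rw [chiOdd, sum_congr rfl hu, sum_congr rfl hv, mul_sum, mul_sum, ← sum_add_distrib, mul_sum]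
  refine sum_congr rfl fun n _ => ?_
  rw [hplus, hminus, mul_left_comm _ (a n), mul_left_comm _ (a n), sin_mul_planeWave,
    sin_mul_planeWave, currentMode, standingMode, standingMode]
  simp only [Prod.mk_add_mk, Prod.mk_sub_mk]
  ring_nf

lemma sum_range_ite_succ_lt (M : ℕ) (g : ℕ → ℂ) :
    ∑ n ∈ range M, (if n + 1 < M then g n else 0) = ∑ n ∈ range (M - 1), g n := by
  rcases M with _ | N
  · simp
  · rw [sum_range_succ, if_neg (lt_irrefl _), add_zero, Nat.add_sub_cancel]
    exact sum_congr rfl fun n hn => if_pos (by simpa using hn)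

lemma sum_sum_conj_mul_adjacent (a : ℕ → ℂ) (M : ℕ) :
    ∑ m ∈ range M, ∑ n ∈ range M, conj (a m) * a n
        * ((if (m : ℤ) = n + 1 then 1 else 0) + (if (m : ℤ) = n - 1 then 1 else 0))
      = ((2 * (∑ n ∈ range (M - 1), conj (a (n + 1)) * a n).re : ℝ) : ℂ) := by
  have hup (m n : ℕ) : ((m : ℤ) = n + 1) ↔ m = n + 1 := by omega
  have hdown (m n : ℕ) : ((m : ℤ) = n - 1) ↔ n = m + 1 := by omega
  simp only [mul_add, mul_ite, mul_one, mul_zero, sum_add_distrib, hup, hdown]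
  rw [sum_comm, ← add_conj, map_sum]
  simp only [sum_ite_eq', mem_range, map_mul, conj_conj, sum_range_ite_succ_lt]
  exact congrArg _ (sum_congr rfl fun n _ => mul_comm _ _)

end ShiftedStandingWave

open ShiftedStandingWave

theorem stmt18_general (α Φ : ℝ) (k : ℕ) (a : ℕ → ℂ) :
    (∫ θ₁ in (0 : ℝ)..(2 * Real.pi), ∫ θ₂ in (0 : ℝ)..(2 * Real.pi),
        (starRingEnd ℂ) (psiOdd k a θ₁ θ₂) * chiOdd α Φ k a θ₁ θ₂)
      = ((-8 * Real.pi * α *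
            (2 * Real.pi *
              (∑ n ∈ Finset.range (k - 2), (starRingEnd ℂ) (a (n + 1)) * a n).re) *
            Real.sin Φ : ℝ) : ℂ) := by
  simp_rw [psiOdd_eq_sum, chiOdd_eq_sum]
  rw [integral_integral_conj_sum_mul_sum _ _ _ _ (fun m => continuous_standingMode _ _ _)
    (fun n => continuous_currentMode _ _ _ _)]
  simp_rw [integral_integral_conj_standingMode_mul_currentMode,
    mul_left_comm _ ((-8 * Real.pi ^ 2 * α * Real.sin Φ : ℝ) : ℂ), ← Finset.mul_sum,
    sum_sum_conj_mul_adjacent, show k - 1 - 1 = k - 2 by omega]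
  push_cast
  ring

/-- sinusoidal phase dependence of the Josephson current on a
one-mode shifted standing wave: `⟨ψ, I_{S¹}(Φ)ψ⟩ = −8πα C sin Φ` with
`C = 2π Re Σ_{n=0}^{k−3} conj(a_{n+1}) a_n`. -/
theorem stmt18 (α Φ : ℝ) (k : ℕ) (hk : 3 ≤ k) (a : ℕ → ℂ) :
    (∫ θ₁ in (0 : ℝ)..(2 * Real.pi), ∫ θ₂ in (0 : ℝ)..(2 * Real.pi),
        (starRingEnd ℂ) (psiOdd k a θ₁ θ₂) * chiOdd α Φ k a θ₁ θ₂)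
      = ((-8 * Real.pi * α *
            (2 * Real.pi *
              (∑ n ∈ Finset.range (k - 2), (starRingEnd ℂ) (a (n + 1)) * a n).re) *
            Real.sin Φ : ℝ) : ℂ) :=
  stmt18_general α Φ k a
end
end

section
/- Vanishing of the Fraunhofer pattern: let α ∈ ℝ and Ψ ∈ ℝ, and for Φ ∈ ℝ define B(Φ) = ∫₀^{2π}∫₀^{2π} conj(ψ(θ₁,θ₂)) · χ_Φ(θ₁,θ₂) dθ₁ dθ₂, where either (standing wave case) k ≥ 2, a₀,…,a_{k−1} ∈ ℂ, ψ(θ₁,θ₂) = Σ_{n=1}^{k−1} a_n (e^{inθ₁}+e^{−inθ₁}) e^{i(k−n)θ₂} + a₀ e^{ikθ₂} and χ_Φ(θ₁,θ₂) = 2α[ sin(θ₁−Φ) a₀ e^{i(k−1)θ₂} + sin(θ₁−Φ+θ₂) Σ_{n=1}^{k−1} a_n e^{−inθ₁} e^{i(k−n)θ₂} + sin(θ₁−Φ−θ₂) Σ_{n=1}^{k−1} a_n e^{inθ₁} e^{i(k−n)θ₂} ], or (one-mode shifted case) k ≥ 3, a₀,…,a_{k−2} ∈ ℂ, ψ(θ₁,θ₂)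 = Σ_{n=0}^{k−2} a_n (e^{inθ₁}+e^{−i(n+1)θ₁}) e^{−i(k−n)θ₂} and χ_Φ(θ₁,θ₂) = 2α[ sin(θ₁−Φ+θ₂) Σ_{n=0}^{k−2} a_n e^{inθ₁} e^{−i(k−n)θ₂} + sin(θ₁−Φ−θ₂) Σ_{n=0}^{k−2} a_n e^{−i(n+1)θ₁} e^{−i(k−n)θ₂} ]. Then the total Josephson current vanishes: ∫_{−1/2}^{1/2} B(Ψx) dx = 0. -/
/-! The reflection `θ₁ ↦ 2π - θ₁` swaps the modes `e^{inθ₁}` and `e^{-inθ₁}` (in the shifted case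
`e^{inθ₁}` and `e^{-i(n+1)θ₁}`, up to the phase `e^{iθ₁}`, which cancels in `conj ψ · χ`), and turns
`sin(θ₁ - Φ ± θ₂)` into `-sin(θ₁ + Φ ∓ θ₂)`. So it maps the integrand of `B(Φ)` to minus that of
`B(-Φ)`: `B` is odd, hence so is `x ↦ B(Ψx)`, and its integral over `[-1/2, 1/2]` vanishes. -/

noncomputable section

open Complex intervalIntegral

section OddIntegrals

variable {E : Type*} [NormedAddCommGroup E] [NormedSpace ℝ E]

theorem Function.Odd.intervalIntegral_neg_eq_zero {f : ℝ → E} (hf : f.Odd) (a : ℝ) :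
    ∫ x in -a..a, f x = 0 := by
  have h := integral_comp_neg (a := -a) (b := a) f
  simp only [hf.eq, integral_neg, neg_neg, neg_eq_iff_add_eq_zero, ← two_smul ℝ] at h
  exact (smul_eq_zero.1 h).resolve_left two_ne_zero

theorem odd_intervalIntegral_of_reflect {G : ℝ → ℝ → E} {a b : ℝ}
    (hG : ∀ Φ θ, G Φ (a + b - θ) = -G (-Φ) θ) : Function.Odd fun Φ => ∫ θ in a..b, G Φ θ := by
  intro Φ
  have h := integral_comp_sub_left (a := a) (b := b) (G (-Φ)) (a + b)
  simp only [add_sub_cancel_right, add_sub_cancel_left, hG, neg_neg, integral_neg] at h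
  exact h.symm

end OddIntegrals

section Reflection

variable (k : ℕ) (a : ℕ → ℂ) (α Φ θ θ₁ θ₂ : ℝ) (n : ℕ)

lemma exp_I_mul_natCast_mul_two_pi_sub :
    exp (I * (n * ((2 * Real.pi - θ : ℝ) : ℂ))) = exp (-(I * (n * θ))) :=
  exp_eq_exp_iff_exists_int.2 ⟨n, by push_cast; ring⟩

lemma exp_neg_I_mul_natCast_mul_two_pi_sub :
    exp (-(I * (n * ((2 * Real.pi - θ : ℝ) : ℂ)))) = exp (I * (n * θ)) :=
  exp_eq_exp_iff_exists_int.2 ⟨-n, by push_cast; ring⟩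

lemma exp_I_mul_natCast_mul_two_pi_sub_eq_mul :
    exp (I * (n * ((2 * Real.pi - θ : ℝ) : ℂ))) = exp (I * θ) * exp (-(I * ((n + 1) * θ))) := by
  rw [← exp_add]
  exact exp_eq_exp_iff_exists_int.2 ⟨n, by push_cast; ring⟩

lemma exp_neg_I_mul_natCast_add_one_mul_two_pi_sub_eq_mul :
    exp (-(I * ((n + 1) * ((2 * Real.pi - θ : ℝ) : ℂ)))) = exp (I * θ) * exp (I * (n * θ)) := by
  rw [← exp_add]
  exact exp_eq_exp_iff_exists_int.2 ⟨-(n + 1), by push_cast; ring⟩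

lemma psiEven_two_pi_sub : psiEven k a (2 * Real.pi - θ₁) θ₂ = psiEven k a θ₁ θ₂ := by
  simp only [psiEven, exp_I_mul_natCast_mul_two_pi_sub, exp_neg_I_mul_natCast_mul_two_pi_sub,
    add_comm (exp (-_))]

lemma chiEven_two_pi_sub :
    chiEven α Φ k a (2 * Real.pi - θ₁) θ₂ = -chiEven α (-Φ) k a θ₁ θ₂ := by
  simp only [chiEven, exp_I_mul_natCast_mul_two_pi_sub, exp_neg_I_mul_natCast_mul_two_pi_sub]
  push_cast
  simp only [sin_add, sin_sub, cos_sub, sin_two_pi, cos_two_pi, sin_neg, cos_neg]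
  ring

lemma psiOdd_two_pi_sub :
    psiOdd k a (2 * Real.pi - θ₁) θ₂ = exp (I * θ₁) * psiOdd k a θ₁ θ₂ := by
  simp only [psiOdd, exp_I_mul_natCast_mul_two_pi_sub_eq_mul,
    exp_neg_I_mul_natCast_add_one_mul_two_pi_sub_eq_mul, Finset.mul_sum]
  exact Finset.sum_congr rfl fun _ _ => by ring

lemma chiOdd_two_pi_sub :
    chiOdd α Φ k a (2 * Real.pi - θ₁) θ₂ = -(exp (I * θ₁) * chiOdd α (-Φ) k a θ₁ θ₂) := by
  simp only [chiOdd, exp_I_mul_natCast_mul_two_pi_sub_eq_mul,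
    exp_neg_I_mul_natCast_add_one_mul_two_pi_sub_eq_mul, mul_add, Finset.mul_sum, neg_add,
    ← Finset.sum_neg_distrib, ← Finset.sum_add_distrib]
  refine Finset.sum_congr rfl fun _ _ => ?_
  push_cast
  simp only [sin_add, sin_sub, cos_sub, sin_two_pi, cos_two_pi, sin_neg, cos_neg]
  ring

end Reflection

section Oddness

variable (α : ℝ) (k : ℕ) (a : ℕ → ℂ)

lemma odd_integral_conj_psiEven_mul_chiEven :
    Function.Odd fun Φ => ∫ θ₁ in (0 : ℝ)..(2 * Real.pi), ∫ θ₂ in (0 : ℝ)..(2 * Real.pi),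
      (starRingEnd ℂ) (psiEven k a θ₁ θ₂) * chiEven α Φ k a θ₁ θ₂ :=
  odd_intervalIntegral_of_reflect fun Φ θ₁ => by
    simp only [zero_add, psiEven_two_pi_sub, chiEven_two_pi_sub, mul_neg, integral_neg]

lemma odd_integral_conj_psiOdd_mul_chiOdd :
    Function.Odd fun Φ => ∫ θ₁ in (0 : ℝ)..(2 * Real.pi), ∫ θ₂ in (0 : ℝ)..(2 * Real.pi),
      (starRingEnd ℂ) (psiOdd k a θ₁ θ₂) * chiOdd α Φ k a θ₁ θ₂ :=
  odd_intervalIntegral_of_reflect fun Φ θ₁ => by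
    have hphase : (starRingEnd ℂ) (exp (I * θ₁)) * exp (I * θ₁) = 1 := by
      rw [← exp_conj, ← exp_add, map_mul, conj_I, conj_ofReal, neg_mul, neg_add_cancel, exp_zero]
    simp only [zero_add, psiOdd_two_pi_sub, chiOdd_two_pi_sub, map_mul, ← integral_neg]
    refine integral_congr fun θ₂ _ => ?_
    linear_combination (-(starRingEnd ℂ) (psiOdd k a θ₁ θ₂) * chiOdd α (-Φ) k a θ₁ θ₂) * hphase

end Oddness

/-- vanishing of the Fraunhofer pattern.  For a standing wave or a
one-mode shifted standing wave, the total Josephson current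
`∫_{−1/2}^{1/2} B(Ψx) dx` vanishes, where `B(Φ) = ⟨ψ, I_{S¹}(Φ)ψ⟩`. -/
theorem stmt19 (α Ψ : ℝ) :
    (∀ k : ℕ, 2 ≤ k → ∀ a : ℕ → ℂ,
      (∫ x in (-(1 / 2) : ℝ)..(1 / 2 : ℝ),
        ∫ θ₁ in (0 : ℝ)..(2 * Real.pi), ∫ θ₂ in (0 : ℝ)..(2 * Real.pi),
          (starRingEnd ℂ) (psiEven k a θ₁ θ₂) * chiEven α (Ψ * x) k a θ₁ θ₂) = 0) ∧
    (∀ k : ℕ, 3 ≤ k → ∀ a : ℕ → ℂ,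
      (∫ x in (-(1 / 2) : ℝ)..(1 / 2 : ℝ),
        ∫ θ₁ in (0 : ℝ)..(2 * Real.pi), ∫ θ₂ in (0 : ℝ)..(2 * Real.pi),
          (starRingEnd ℂ) (psiOdd k a θ₁ θ₂) * chiOdd α (Ψ * x) k a θ₁ θ₂) = 0) := by
  have hΨ : Function.Odd (Ψ * ·) := mul_neg Ψ
  exact ⟨fun k _ a =>
      ((odd_integral_conj_psiEven_mul_chiEven α k a).comp_odd hΨ).intervalIntegral_neg_eq_zero _,
    fun k _ a =>
      ((odd_integral_conj_psiOdd_mul_chiOdd α k a).comp_odd hΨ).intervalIntegral_neg_eq_zero _⟩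
end
end
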